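/- For n ≥ 2, there exists a family of exactly n vertex-disjoint copies of the star K_{1,3} in BH_n whose vertex deletion disconnects BH_n; hence κ(BH_n; K_{1,3}) ≤ n. -/

import Mathlib

/-- The `n`-dimensional balanced hypercube `BH_n` (Wu–Huang). Vertices are
elements of `{0,1,2,3}^n`; a vertex `(a_0,…,a_{n-1})` is adjacent to
`((a_0 ± 1) mod 4, a_1, …, a_{n-1})` and, for each `i ≠ 0`, to
`((a_0 ± 1) mod 4, …, (a_i + (-1)^{a_0}) mod 4, …, a_{n-1})`. -/
def balancedHypercube (n : ℕ) [NeZero n] :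
    SimpleGraph (Fin n → ZMod 4) :=
  SimpleGraph.fromRel (fun u v =>
    (v 0 = u 0 + 1 ∨ v 0 = u 0 - 1) ∧
    ((∀ i, i ≠ 0 → v i = u i) ∨
      ∃ j : Fin n, j ≠ 0 ∧ v j = u j + (-1 : ZMod 4) ^ (u 0).val ∧
        ∀ i, i ≠ 0 → i ≠ j → v i = u i))


/-!
The neighbours of `0` in `BH_n` are the `2n` vertices `(±1, x)` with `x = 0` or `x = e_j`
for some `j ≠ 0`. They come in `n` pairs `{(1, x), (3, x)}`, and each pair is covered by a
claw centred at a vertex with first coordinate `2`. These `n` claws are pairwise disjoint and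
contain neither `0` nor `(2, 0, …, 0)`, so deleting them isolates `0` while `(2, 0, …, 0)`
survives.
-/

lemma Fin.one_ne_zero_of_two_le {n : ℕ} [NeZero n] (hn : 2 ≤ n) : (1 : Fin n) ≠ 0 := by
  simp [Fin.ext_iff, Nat.mod_eq_of_lt (show 1 < n by omega)]

theorem SimpleGraph.not_connected_induce_compl_of_neighborSet_subset {V : Type*}
    (G : SimpleGraph V) {S : Set V} {v w : V} (hv : v ∉ S) (hw : w ∉ S) (hvw : v ≠ w)
    (hN : G.neighborSet v ⊆ S) : ¬ (G.induce Sᶜ).Connected := fun hconn => by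
  have : Nontrivial (Sᶜ : Set V) :=
    ⟨⟨⟨v, hv⟩, ⟨w, hw⟩, fun h => hvw (congrArg Subtype.val h)⟩⟩
  obtain ⟨u, hu⟩ := hconn.preconnected.exists_adj_of_nontrivial ⟨v, hv⟩
  exact u.2 (hN hu)

namespace BalancedHypercube

variable {n : ℕ} [NeZero n]

def Step (u v : Fin n → ZMod 4) : Prop :=
  (v 0 = u 0 + 1 ∨ v 0 = u 0 - 1) ∧
    ((∀ i, i ≠ 0 → v i = u i) ∨
      ∃ j : Fin n, j ≠ 0 ∧ v j = u j + (-1 : ZMod 4) ^ (u 0).val ∧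
        ∀ i, i ≠ 0 → i ≠ j → v i = u i)

lemma Step.ne {u v : Fin n → ZMod 4} (h : Step u v) : u ≠ v := by
  rintro rfl
  rcases h.1 with h | h
  · exact absurd (left_eq_add.1 h) (by decide)
  · exact absurd (sub_eq_self.1 h.symm) (by decide)

lemma adj_iff {u v : Fin n → ZMod 4} :
    (balancedHypercube n).Adj u v ↔ Step u v ∨ Step v u := by
  rw [balancedHypercube, SimpleGraph.fromRel_adj]
  exact ⟨And.right, fun h => ⟨h.elim Step.ne fun h => h.ne.symm, h⟩⟩

lemma adj_apply_zero {u v : Fin n → ZMod 4} (h : (balancedHypercube n).Adj u v) :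
    v 0 = u 0 + 1 ∨ v 0 = u 0 - 1 := by
  rcases adj_iff.1 h with h | h
  · exact h.1
  · rcases h.1 with h | h
    · exact Or.inr (eq_sub_of_add_eq h.symm)
    · exact Or.inl (eq_add_of_sub_eq h.symm)

/-- `vertex a j b` is `(a, b e_j)`; for `j = 0` it is `(a, 0, …, 0)` whatever `b` is. -/
def vertex (a : ZMod 4) (j : Fin n) (b : ZMod 4) : Fin n → ZMod 4 :=
  fun k => if k = 0 then a else if k = j then b else 0

variable {a a' b b' : ZMod 4} {j k : Fin n}

@[simp]
lemma vertex_apply_zero : vertex a j b 0 = a := by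
  simp [vertex]

@[simp]
lemma vertex_apply_self (hj : j ≠ 0) : vertex a j b j = b := by
  simp [vertex, hj]

lemma vertex_apply_of_ne_zero (hk : k ≠ 0) : vertex a j b k = if k = j then b else 0 := by
  simp [vertex, hk]

lemma vertex_apply_of_ne (hk : k ≠ 0) (hkj : k ≠ j) : vertex a j b k = 0 := by
  simp [vertex, hk, hkj]

lemma vertex_inj (hj : j ≠ 0) : vertex a j b = vertex a' j b' ↔ a = a' ∧ b = b' := by
  refine ⟨fun h => ⟨by simpa using congrFun h 0, by simpa [hj] using congrFun h j⟩, ?_⟩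
  rintro ⟨rfl, rfl⟩
  rfl

lemma eq_vertex {x : Fin n → ZMod 4} (hj : j ≠ 0 → x j = b)
    (hrest : ∀ k, k ≠ 0 → k ≠ j → x k = 0) : x = vertex (x 0) j b := by
  funext k
  by_cases hk : k = 0
  · simp [hk]
  by_cases hkj : k = j
  · subst hkj
    simp [hk, hj hk]
  · simp [vertex_apply_of_ne hk hkj, hrest k hk hkj]

lemma adj_vertex_of_outer (ha : a' = a + 1 ∨ a' = a - 1) :
    (balancedHypercube n).Adj (vertex a j b) (vertex a' j b) :=
  adj_iff.2 <| Or.inl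
    ⟨by simpa using ha, Or.inl fun i hi => by simp [vertex_apply_of_ne_zero hi]⟩

lemma adj_vertex_of_inner (hj : j ≠ 0) (ha : a' = a + 1 ∨ a' = a - 1)
    (hb : b' = b + (-1) ^ a.val) :
    (balancedHypercube n).Adj (vertex a j b) (vertex a' j b') :=
  adj_iff.2 <| Or.inl ⟨by simpa using ha, Or.inr ⟨j, hj, by simpa [hj] using hb,
    fun i hi hij => by simp [vertex_apply_of_ne hi hij]⟩⟩

lemma eq_vertex_of_adj_zero {x : Fin n → ZMod 4} (h : (balancedHypercube n).Adj 0 x) :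
    (x 0 = 1 ∨ x 0 = 3) ∧ (x = vertex (x 0) 1 0 ∨ ∃ j ≠ 0, x = vertex (x 0) j 1) := by
  have hx0 : x 0 = 1 ∨ x 0 = 3 := by
    have h0 := adj_apply_zero h
    rw [Pi.zero_apply] at h0
    generalize x 0 = t at h0
    revert t
    decide
  refine ⟨hx0, ?_⟩
  rcases adj_iff.1 h with
    ⟨-, hrest | ⟨j, hj, hxj, hrest⟩⟩ | ⟨-, hrest | ⟨j, hj, hxj, hrest⟩⟩
  · exact Or.inl (eq_vertex (hrest 1) fun k hk _ => hrest k hk)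
  · exact Or.inr ⟨j, hj, eq_vertex (fun _ => by simpa using hxj) hrest⟩
  · exact Or.inl (eq_vertex (fun h1 => (hrest 1 h1).symm) fun k hk _ => (hrest k hk).symm)
  · -- `x 0` is odd, so `(-1) ^ (x 0).val = -1`
    have hxj' : x j = 1 := by
      rw [Pi.zero_apply] at hxj
      generalize x 0 = a at hx0 hxj
      generalize x j = t at hxj ⊢
      revert a t
      decide
    exact Or.inr ⟨j, hj, eq_vertex (fun _ => hxj') fun k hk hkj => (hrest k hk hkj).symm⟩

/-- The `j`-th claw contains the neighbours `(1, e_j)` and `(3, e_j)` of `0`, where `e_0 = 0`;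
the claw for `j = 0` lies in direction `1`, using `vertex a 1 0 = (a, 0, …, 0)`. -/
def claw (j : Fin n) : Set (Fin n → ZMod 4) :=
  if j = 0 then {vertex 2 1 3, vertex 1 1 0, vertex 3 1 0, vertex 1 1 3}
  else {vertex 2 j 1, vertex 1 j 1, vertex 3 j 1, vertex 1 j 2}

lemma exists_claw_eq (hn : 2 ≤ n) (j : Fin n) :
    ∃ u v w y : Fin n → ZMod 4, v ≠ w ∧ v ≠ y ∧ w ≠ y ∧
      (balancedHypercube n).Adj u v ∧ (balancedHypercube n).Adj u w ∧
      (balancedHypercube n).Adj u y ∧ claw j = {u, v, w, y} := by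
  by_cases hj : j = 0
  · have h1 := Fin.one_ne_zero_of_two_le hn
    exact ⟨vertex 2 1 3, vertex 1 1 0, vertex 3 1 0, vertex 1 1 3,
      (vertex_inj h1).not.2 (by decide), (vertex_inj h1).not.2 (by decide),
      (vertex_inj h1).not.2 (by decide), adj_vertex_of_inner h1 (by decide) (by decide),
      adj_vertex_of_inner h1 (by decide) (by decide), adj_vertex_of_outer (by decide),
      by rw [claw, if_pos hj]⟩
  · exact ⟨vertex 2 j 1, vertex 1 j 1, vertex 3 j 1, vertex 1 j 2,
      (vertex_inj hj).not.2 (by decide), (vertex_inj hj).not.2 (by decide),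
      (vertex_inj hj).not.2 (by decide), adj_vertex_of_outer (by decide),
      adj_vertex_of_outer (by decide), adj_vertex_of_inner hj (by decide) (by decide),
      by rw [claw, if_neg hj]⟩

lemma apply_of_mem_claw_zero {x : Fin n → ZMod 4} (hx : x ∈ claw 0) (hk : k ≠ 0) :
    x k = 0 ∨ x k = 3 := by
  simp only [claw, if_pos, Set.mem_insert_iff, Set.mem_singleton_iff] at hx
  rcases hx with rfl | rfl | rfl | rfl <;> rw [vertex_apply_of_ne_zero hk] <;> split_ifs <;> simp

lemma apply_of_mem_claw (hj : j ≠ 0) {x : Fin n → ZMod 4} (hx : x ∈ claw j) :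
    (x j = 1 ∨ x j = 2) ∧ ∀ k, k ≠ 0 → k ≠ j → x k = 0 := by
  simp only [claw, if_neg hj, Set.mem_insert_iff, Set.mem_singleton_iff] at hx
  rcases hx with rfl | rfl | rfl | rfl <;>
    exact ⟨by simp [hj], fun k hk hkj => vertex_apply_of_ne hk hkj⟩

lemma pairwise_disjoint_claw :
    Pairwise (Function.onFun Disjoint (claw : Fin n → Set (Fin n → ZMod 4))) := by
  have key : ∀ {j k : Fin n}, j ≠ k → k ≠ 0 → Disjoint (claw j) (claw k) := by
    intro j k hjk hk
    refine Set.disjoint_left.2 fun x hxj hxk => ?_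
    obtain ⟨hxk, -⟩ := apply_of_mem_claw hk hxk
    by_cases hj : j = 0
    · subst hj
      rcases hxk with h | h <;> rcases apply_of_mem_claw_zero hxj hk with h' | h' <;>
        rw [h] at h' <;> exact absurd h' (by decide)
    · rw [(apply_of_mem_claw hj hxj).2 k hk (Ne.symm hjk)] at hxk
      revert hxk
      decide
  intro j k hjk
  by_cases hk : k = 0
  · exact (key (Ne.symm hjk) (hk ▸ hjk)).symm
  · exact key hjk hk

lemma claw_injective (hn : 2 ≤ n) :
    Function.Injective (claw : Fin n → Set (Fin n → ZMod 4)) := by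
  intro j k hjk
  by_contra hne
  obtain ⟨u, v, w, y, -, -, -, -, -, -, hu⟩ := exists_claw_eq hn k
  have := pairwise_disjoint_claw hne
  rw [Function.onFun, hjk, disjoint_self, hu, Set.bot_eq_empty] at this
  exact (Set.insert_nonempty _ _).ne_empty this

lemma notMem_claw (hn : 2 ≤ n) {x : Fin n → ZMod 4} (hx0 : x 0 = 0 ∨ x 0 = 2)
    (hx : ∀ k, k ≠ 0 → x k = 0) (j : Fin n) : x ∉ claw j := by
  have key : ∀ {a d b}, d ≠ 0 → x = vertex a d b → (a = 0 ∨ a = 2) ∧ b = 0 := by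
    rintro a d b hd rfl
    exact ⟨by simpa using hx0, by simpa [hd] using hx d hd⟩
  have h1 := Fin.one_ne_zero_of_two_le hn
  unfold claw
  split_ifs with hj
  · simp only [Set.mem_insert_iff, Set.mem_singleton_iff]
    rintro (h | h | h | h) <;> exact absurd (key h1 h) (by decide)
  · simp only [Set.mem_insert_iff, Set.mem_singleton_iff]
    rintro (h | h | h | h) <;> exact absurd (key hj h) (by decide)

lemma exists_mem_claw_of_adj_zero {x : Fin n → ZMod 4} (h : (balancedHypercube n).Adj 0 x) :
    ∃ j, x ∈ claw j := by
  obtain ⟨hx0, hx | ⟨j, hj, hx⟩⟩ := eq_vertex_of_adj_zero h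
  · refine ⟨0, ?_⟩
    rw [hx]
    rcases hx0 with h | h <;> simp [claw, h]
  · refine ⟨j, ?_⟩
    rw [hx]
    rcases hx0 with h | h <;> simp [claw, hj, h]

end BalancedHypercube

open BalancedHypercube in
/-- For `n ≥ 2`, there is a family of exactly `n` vertex-disjoint copies of the
star `K_{1,3}` in `BH_n` whose vertex deletion disconnects `BH_n`; hence
`κ(BH_n; K_{1,3}) ≤ n`. -/
theorem balancedHypercube_K13_structure_cut (n : ℕ) [NeZero n] (hn : 2 ≤ n) :
    ∃ F : Finset (Set (Fin n → ZMod 4)), F.card = n ∧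
      (↑F : Set (Set (Fin n → ZMod 4))).Pairwise Disjoint ∧
      (∀ A ∈ F, ∃ u v w y : Fin n → ZMod 4, v ≠ w ∧ v ≠ y ∧ w ≠ y ∧
        (balancedHypercube n).Adj u v ∧ (balancedHypercube n).Adj u w ∧
        (balancedHypercube n).Adj u y ∧ A = {u, v, w, y}) ∧
      ¬ ((balancedHypercube n).induce ((⋃ A ∈ F, A)ᶜ)).Connected := by
  classical
  refine ⟨Finset.univ.image claw, ?_, ?_, ?_, ?_⟩
  · rw [Finset.card_image_of_injective _ (claw_injective hn), Finset.card_univ,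
      Fintype.card_fin]
  · simpa using pairwise_disjoint_claw.range_pairwise
  · simpa using exists_claw_eq hn
  · have hU : ⋃ A ∈ Finset.univ.image claw, A = ⋃ j, claw (n := n) j := by simp
    rw [hU]
    refine (balancedHypercube n).not_connected_induce_compl_of_neighborSet_subset
      (v := 0) (w := vertex 2 0 0) ?_ ?_ ?_
      fun x hx => Set.mem_iUnion.2 (exists_mem_claw_of_adj_zero hx)
    · simpa using notMem_claw hn (x := 0) (by simp) fun _ _ => rfl
    · simpa using notMem_claw hn (by simp) fun k hk => vertex_apply_of_ne hk hk
    · exact fun h => absurd (congrFun h 0) (by rw [Pi.zero_apply, vertex_apply_zero]; decide)
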